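/- arXiv:1311.1176 — 7 statements merged into one kernel-verified Lean document; each statement's English description precedes it below -/
import Mathlib

section
/- The Weierstrass function u₀(x) = ∑_{n=0}^∞ aⁿ cos(bⁿ x), with 0 < a < 1, b an odd integer, and ab > 1 + 3π/2, is not differentiable at any point of ℝ. -/
/-!
Fix `x` and `m`, write `bᵐ x = απ + ε` with `α ∈ ℤ`, `|ε| ≤ π/2`, and take `y` with
`bᵐ y = (α + 1)π`, so that `0 < y - x ≤ 3π / (2bᵐ)`. Split `u₀ y - u₀ x` at the index `m`.
Because `b` is odd, the `n`-th tail term is `-(-1)^α aⁿ (1 + cos (bⁿ⁻ᵐ ε))`: all tail terms have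
the same sign and the first one alone has size at least `aᵐ`. Since `cos` is 1-Lipschitz, the
head is at most `(ab)ᵐ / (ab - 1) · (y - x)`. Hence the difference quotient at `x` exceeds
`(ab)ᵐ (2 / (3π) - 1 / (ab - 1))`, which tends to infinity since `ab > 1 + 3π/2`, while `y → x`.
-/

open Real Filter Topology Finset

lemma not_differentiableAt_of_tendsto_abs_slope {f : ℝ → ℝ} {x : ℝ} {y : ℕ → ℝ}
    (hy : Tendsto y atTop (𝓝[≠] x)) (hslope : Tendsto (fun m => |slope f x (y m)|) atTop atTop) :
    ¬ DifferentiableAt ℝ f x := fun hd =>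
  not_tendsto_atTop_of_tendsto_nhds
    ((hasDerivAt_iff_tendsto_slope.mp hd.hasDerivAt).comp hy).abs hslope

lemma geom_sum_le_pow_div_sub_one {r : ℝ} (hr : 1 < r) (m : ℕ) :
    ∑ n ∈ range m, r ^ n ≤ r ^ m / (r - 1) := by
  rw [geom_sum_eq hr.ne']
  gcongr
  linarith

lemma cos_odd_mul_int_mul_pi_add {k : ℕ} (hk : Odd k) (j : ℤ) (t : ℝ) :
    cos (k * (j * π + t)) = (-1) ^ j * cos (k * t) := by
  rw [show (k : ℝ) * (j * π + t) = k * t + ((k * j : ℤ) : ℝ) * π by push_cast; ring,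
    cos_add_int_mul_pi, zpow_mul, zpow_natCast, hk.neg_one_pow]

lemma exists_int_mul_pi_add_abs_le (z : ℝ) : ∃ (α : ℤ) (ε : ℝ), |ε| ≤ π / 2 ∧ z = α * π + ε := by
  refine ⟨round (z / π), z - round (z / π) * π, ?_, by ring⟩
  have h := abs_sub_round (z / π)
  calc |z - round (z / π) * π| = |z / π - round (z / π)| * π := by
        rw [← abs_of_pos pi_pos, ← abs_mul, abs_of_pos pi_pos]; field_simp
    _ ≤ 1 / 2 * π := by gcongr
    _ = π / 2 := by ring

lemma summable_pow_mul_of_abs_le {a C : ℝ} (ha : 0 ≤ a) (ha1 : a < 1) {g : ℕ → ℝ}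
    (hg : ∀ n, |g n| ≤ C) : Summable fun n => a ^ n * g n := by
  refine ((summable_geometric_of_lt_one ha ha1).mul_right C).of_norm_bounded fun n => ?_
  rw [norm_mul, norm_pow, Real.norm_of_nonneg ha]
  exact mul_le_mul_of_nonneg_left (hg n) (by positivity)

noncomputable def weierstrassFun (a b x : ℝ) : ℝ := ∑' n : ℕ, a ^ n * cos (b ^ n * x)

section
variable {a : ℝ}

lemma summable_weierstrass (ha : 0 ≤ a) (ha1 : a < 1) (b x : ℝ) :
    Summable fun n : ℕ => a ^ n * cos (b ^ n * x) :=
  summable_pow_mul_of_abs_le ha ha1 fun _ => abs_cos_le_one _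

lemma weierstrassFun_sub_eq (ha : 0 ≤ a) (ha1 : a < 1) (b x y : ℝ) (m : ℕ) :
    weierstrassFun a b y - weierstrassFun a b x =
      ∑ n ∈ range m, a ^ n * (cos (b ^ n * y) - cos (b ^ n * x)) +
        ∑' n, a ^ (n + m) * (cos (b ^ (n + m) * y) - cos (b ^ (n + m) * x)) := by
  have hy := summable_weierstrass ha ha1 b y
  have hx := summable_weierstrass ha ha1 b x
  simp only [mul_sub]
  rw [weierstrassFun, weierstrassFun, ← hy.tsum_sub hx]
  exact ((hy.sub hx).sum_add_tsum_nat_add m).symm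

lemma abs_sum_range_pow_mul_cos_sub_le (ha : 0 ≤ a) {b : ℝ} (hb : 0 ≤ b) (x y : ℝ) (m : ℕ) :
    |∑ n ∈ range m, a ^ n * (cos (b ^ n * y) - cos (b ^ n * x))| ≤
      (∑ n ∈ range m, (a * b) ^ n) * |y - x| := by
  rw [sum_mul]
  refine (abs_sum_le_sum_abs _ _).trans (sum_le_sum fun n _ => ?_)
  calc |a ^ n * (cos (b ^ n * y) - cos (b ^ n * x))| ≤ a ^ n * |b ^ n * y - b ^ n * x| := by
        rw [abs_mul, abs_of_nonneg (by positivity)]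
        exact mul_le_mul_of_nonneg_left (abs_cos_sub_cos_le _ _) (by positivity)
    _ = (a * b) ^ n * |y - x| := by
        rw [← mul_sub, abs_mul, abs_of_nonneg (by positivity), mul_pow, mul_assoc]

lemma le_abs_tsum_weierstrass_tail (ha : 0 < a) (ha1 : a < 1) {b : ℕ} (hb : Odd b) {m : ℕ}
    {α : ℤ} {ε x y : ℝ} (hε : |ε| ≤ π / 2) (hx : (b : ℝ) ^ m * x = α * π + ε)
    (hy : (b : ℝ) ^ m * y = (α + 1) * π) :
    a ^ m ≤ |∑' n, a ^ (n + m) * (cos ((b : ℝ) ^ (n + m) * y) - cos ((b : ℝ) ^ (n + m) * x))| := by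
  set g : ℕ → ℝ := fun n => a ^ (n + m) * (1 + cos ((b : ℝ) ^ n * ε))
  have hterm (n : ℕ) : a ^ (n + m) * (cos ((b : ℝ) ^ (n + m) * y) - cos ((b : ℝ) ^ (n + m) * x)) =
      -(-1) ^ α * g n := by
    have hcy := cos_odd_mul_int_mul_pi_add (hb.pow : Odd (b ^ n)) (α + 1) 0
    have hcx := cos_odd_mul_int_mul_pi_add (hb.pow : Odd (b ^ n)) α ε
    push_cast at hcy hcx
    rw [mul_zero, add_zero, cos_zero, mul_one, zpow_add_one₀ (by norm_num)] at hcy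
    have ey : (b : ℝ) ^ (n + m) * y = b ^ n * ((α + 1) * π) := by rw [pow_add, mul_assoc, hy]
    have ex : (b : ℝ) ^ (n + m) * x = b ^ n * (α * π + ε) := by rw [pow_add, mul_assoc, hx]
    rw [ey, ex, hcy, hcx]
    ring
  have hg_nonneg (n : ℕ) : 0 ≤ g n := by
    have := neg_one_le_cos ((b : ℝ) ^ n * ε)
    exact mul_nonneg (by positivity) (by linarith)
  have hg_summable : Summable g := by
    refine ((summable_geometric_of_lt_one ha.le ha1).mul_left (2 * a ^ m)).of_nonneg_of_le
      hg_nonneg fun n => ?_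
    calc g n ≤ a ^ (n + m) * 2 := by
          simp only [g]
          gcongr
          linarith [cos_le_one ((b : ℝ) ^ n * ε)]
      _ = 2 * a ^ m * a ^ n := by ring
  have hg0 : a ^ m ≤ g 0 := by
    have := cos_nonneg_of_mem_Icc (abs_le.1 hε)
    simp only [g, zero_add, pow_zero, one_mul]
    nlinarith [pow_pos ha m]
  rw [tsum_congr hterm, tsum_mul_left, abs_mul, abs_neg, abs_zpow, abs_neg, abs_one, one_zpow,
    one_mul, abs_of_nonneg (tsum_nonneg hg_nonneg)]
  exact hg0.trans (hg_summable.le_tsum 0 fun n _ => hg_nonneg n)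

lemma exists_le_abs_slope_weierstrassFun (ha : 0 < a) (ha1 : a < 1) {b : ℕ} (hb : Odd b)
    (hab : 1 < a * b) (x : ℝ) (m : ℕ) :
    ∃ y, 0 < y - x ∧ y - x ≤ 3 * π / 2 / (b : ℝ) ^ m ∧
      (a * b) ^ m * (2 / (3 * π) - 1 / (a * b - 1)) ≤ |slope (weierstrassFun a b) x y| := by
  obtain ⟨α, ε, hε, hx⟩ := exists_int_mul_pi_add_abs_le ((b : ℝ) ^ m * x)
  have hbm : (0 : ℝ) < (b : ℝ) ^ m := by have := hb.pos; positivity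
  set y := (α + 1) * π / (b : ℝ) ^ m
  have hy : (b : ℝ) ^ m * y = (α + 1) * π := mul_div_cancel₀ _ hbm.ne'
  have hyx : y - x = (π - ε) / (b : ℝ) ^ m := by
    rw [eq_div_iff hbm.ne']; linear_combination hy - hx
  have hd : 0 < y - x := by rw [hyx]; exact div_pos (by linarith [(abs_le.1 hε).2, pi_pos]) hbm
  have hd' : y - x ≤ 3 * π / 2 / (b : ℝ) ^ m := by
    rw [hyx]; gcongr; linarith [(abs_le.1 hε).1]
  refine ⟨y, hd, hd', ?_⟩
  have hW : a ^ m - (∑ n ∈ range m, (a * b) ^ n) * (y - x) ≤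
      |weierstrassFun a b y - weierstrassFun a b x| := by
    have htail := le_abs_tsum_weierstrass_tail ha ha1 hb hε hx hy
    have hhead := abs_sum_range_pow_mul_cos_sub_le ha.le (Nat.cast_nonneg b) x y m
    rw [abs_of_pos hd, ← abs_neg] at hhead
    rw [weierstrassFun_sub_eq ha.le ha1 _ x y m, add_comm, ← sub_neg_eq_add]
    exact (sub_le_sub htail hhead).trans (abs_sub_abs_le_abs_sub _ _)
  have hgeom : (∑ n ∈ range m, (a * b) ^ n) * (y - x) ≤ (a * b) ^ m / (a * b - 1) * (y - x) := by
    gcongr; exact geom_sum_le_pow_div_sub_one hab m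
  have hlead : (a * b) ^ m * (2 / (3 * π)) * (y - x) ≤ a ^ m :=
    calc (a * b) ^ m * (2 / (3 * π)) * (y - x)
        ≤ (a * b) ^ m * (2 / (3 * π)) * (3 * π / 2 / (b : ℝ) ^ m) := by gcongr
      _ = a ^ m := by rw [mul_pow]; field_simp
  rw [slope_def_field, abs_div, abs_of_pos hd, le_div_iff₀ hd]
  linarith [show (a * b) ^ m * (2 / (3 * π) - 1 / (a * b - 1)) * (y - x) =
    (a * b) ^ m * (2 / (3 * π)) * (y - x) - (a * b) ^ m / (a * b - 1) * (y - x) by ring]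
end

theorem weierstrass_nowhere_differentiable_general (a : ℝ) (b : ℕ) (ha : 0 < a) (ha1 : a < 1)
    (hodd : Odd b) (hab : a * b > 1 + 3 * Real.pi / 2) :
    ∀ x : ℝ, ¬ DifferentiableAt ℝ (fun x : ℝ => ∑' n : ℕ, a ^ n * Real.cos ((b : ℝ) ^ n * x)) x := by
  intro x
  have hab1 : 1 < a * b := by linarith [pi_pos]
  have hb1 : (1 : ℝ) < b := by nlinarith
  have hC : 0 < 2 / (3 * π) - 1 / (a * b - 1) := by
    rw [sub_pos, div_lt_div_iff₀ (by linarith) (by positivity)]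
    linarith
  choose y hyx_pos hyx_le hslope using exists_le_abs_slope_weierstrassFun ha ha1 hodd hab1 x
  have hyx : Tendsto (fun m => y m - x) atTop (𝓝 0) :=
    squeeze_zero (fun m => (hyx_pos m).le) hyx_le
      (tendsto_const_nhds.div_atTop (tendsto_pow_atTop_atTop_of_one_lt hb1))
  refine not_differentiableAt_of_tendsto_abs_slope (f := weierstrassFun a b) ?_
    (tendsto_atTop_mono hslope ((tendsto_pow_atTop_atTop_of_one_lt hab1).atTop_mul_const hC))
  exact tendsto_nhdsWithin_iff.2
    ⟨tendsto_sub_nhds_zero_iff.1 hyx, Eventually.of_forall fun m => (sub_pos.1 (hyx_pos m)).ne'⟩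

theorem weierstrass_nowhere_differentiable (a : ℝ) (b : ℕ) (ha : 0 < a) (ha1 : a < 1)
    (hb : 0 < b) (hodd : Odd b) (hab : a * b > 1 + 3 * Real.pi / 2) :
    ∀ x : ℝ, ¬ DifferentiableAt ℝ (fun x : ℝ => ∑' n : ℕ, a ^ n * Real.cos ((b : ℝ) ^ n * x)) x :=
  weierstrass_nowhere_differentiable_general a b ha ha1 hodd hab
end

section
/- For the Weierstrass function u₀ with parameters 0 < a < 1, b an odd integer, ab > 1 + 3π/2, for every x ∈ ℝ the right upper limit superior of |(u₀(t) − u₀(x))/(t − x)| as t → x⁺ is +∞; equivalently, for every x and every n ∈ ℕ there exists y ∈ (x, x + 1/n) with |u₀(y) − u₀(x)| > n·|y − x|. -/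
/-!
Weierstrass' argument, made one-sided. Write `b ^ m * x = α * π + E` with `α ∈ ℤ`, `|E| ≤ π / 2`
and put `y = x + (π - E) / b ^ m`, so that `b ^ m * y = (α + 1) * π`. Since `b` is odd, each term of
index `k + m` of `u₀ y - u₀ x` equals `(-1) ^ (α + 1) * a ^ (k + m) * (1 + cos (b ^ k * E))`: the
tail has one sign and modulus at least `a ^ m`. The first `m` terms are bounded, through the
Lipschitz bound for `cos`, by `(a b) ^ m (y - x) / (a b - 1) ≤ 3π a ^ m / (2 (a b - 1))`. So
`|u₀ y - u₀ x| ≥ (1 - 3π / (2 (a b - 1))) a ^ m` with `0 < y - x ≤ 3π / (2 b ^ m)`, a difference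
quotient of order `(a b) ^ m`, which is unbounded as `m → ∞`.
-/

open Real Finset

noncomputable def weierstrass (a b x : ℝ) : ℝ := ∑' k : ℕ, a ^ k * cos (b ^ k * x)

section

variable {a : ℝ}

theorem summable_pow_mul_of_abs_le_s2 (ha0 : 0 ≤ a) (ha1 : a < 1) {f : ℕ → ℝ} {M : ℝ}
    (hf : ∀ k, |f k| ≤ M) : Summable fun k => a ^ k * f k := by
  refine ((summable_geometric_of_lt_one ha0 ha1).mul_left M).of_norm_bounded fun k => ?_
  rw [norm_mul, norm_pow, Real.norm_of_nonneg ha0, mul_comm]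
  exact mul_le_mul_of_nonneg_right (hf k) (pow_nonneg ha0 k)

theorem summable_pow_mul_cos_sub_cos (ha0 : 0 ≤ a) (ha1 : a < 1) (b x y : ℝ) :
    Summable fun k : ℕ => a ^ k * (cos (b ^ k * y) - cos (b ^ k * x)) :=
  summable_pow_mul_of_abs_le_s2 ha0 ha1 fun _ =>
    (abs_sub _ _).trans (add_le_add (abs_cos_le_one _) (abs_cos_le_one _))

theorem weierstrass_sub_weierstrass (ha0 : 0 ≤ a) (ha1 : a < 1) (b x y : ℝ) :
    weierstrass a b y - weierstrass a b x =
      ∑' k : ℕ, a ^ k * (cos (b ^ k * y) - cos (b ^ k * x)) := by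
  have hsum (t : ℝ) : Summable fun k : ℕ => a ^ k * cos (b ^ k * t) :=
    summable_pow_mul_of_abs_le_s2 ha0 ha1 fun _ => abs_cos_le_one _
  simp only [weierstrass, mul_sub]
  exact ((hsum y).tsum_sub (hsum x)).symm

theorem abs_sum_range_pow_mul_cos_sub_cos_le {b : ℝ} (ha0 : 0 ≤ a) (hb0 : 0 ≤ b)
    (hab : 1 < a * b) {x y : ℝ} (hxy : x ≤ y) (m : ℕ) :
    |∑ k ∈ range m, a ^ k * (cos (b ^ k * y) - cos (b ^ k * x))|
      ≤ (a * b) ^ m / (a * b - 1) * (y - x) := by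
  calc |∑ k ∈ range m, a ^ k * (cos (b ^ k * y) - cos (b ^ k * x))|
      ≤ ∑ k ∈ range m, (a * b) ^ k * (y - x) := by
        refine (abs_sum_le_sum_abs _ _).trans (sum_le_sum fun k _ => ?_)
        calc |a ^ k * (cos (b ^ k * y) - cos (b ^ k * x))|
            ≤ a ^ k * |b ^ k * y - b ^ k * x| := by
              rw [abs_mul, abs_of_nonneg (pow_nonneg ha0 k)]
              exact mul_le_mul_of_nonneg_left (abs_cos_sub_cos_le _ _) (pow_nonneg ha0 k)
          _ = (a * b) ^ k * (y - x) := by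
              rw [← mul_sub, abs_mul, abs_of_nonneg (pow_nonneg hb0 k),
                abs_of_nonneg (sub_nonneg.2 hxy), mul_pow, mul_assoc]
    _ = (∑ k ∈ range m, (a * b) ^ k) * (y - x) := (sum_mul ..).symm
    _ ≤ (a * b) ^ m / (a * b - 1) * (y - x) := by
        refine mul_le_mul_of_nonneg_right ?_ (sub_nonneg.2 hxy)
        rw [geom_sum_eq hab.ne', div_le_div_iff_of_pos_right (sub_pos.2 hab)]
        linarith

theorem pow_le_tsum_pow_mul_one_add_cos (ha0 : 0 ≤ a) (ha1 : a < 1) (b : ℝ) {E : ℝ}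
    (hE : |E| ≤ π / 2) (m : ℕ) :
    a ^ m ≤ ∑' k : ℕ, a ^ (k + m) * (1 + cos (b ^ k * E)) := by
  have hsum : Summable fun k : ℕ => a ^ (k + m) * (1 + cos (b ^ k * E)) := by
    refine ((summable_pow_mul_of_abs_le_s2 ha0 ha1 (f := fun k => 1 + cos (b ^ k * E)) (M := 2)
      fun k => ?_).mul_left (a ^ m)).congr fun k => by ring
    rw [abs_le]
    constructor <;> linarith [neg_one_le_cos (b ^ k * E), cos_le_one (b ^ k * E)]
  have hcosE : 0 ≤ cos E := cos_nonneg_of_mem_Icc (abs_le.1 hE)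
  calc a ^ m ≤ a ^ (0 + m) * (1 + cos (b ^ 0 * E)) := by
        simp only [zero_add, pow_zero, one_mul]
        nlinarith [pow_nonneg ha0 m]
    _ ≤ _ := hsum.le_tsum 0 fun k _ =>
        mul_nonneg (pow_nonneg ha0 _) (by linarith [neg_one_le_cos (b ^ k * E)])

end

theorem exists_eq_int_mul_pi_add_abs_le (t : ℝ) :
    ∃ (α : ℤ) (E : ℝ), t = α * π + E ∧ |E| ≤ π / 2 := by
  refine ⟨round (t / π), t - round (t / π) * π, by ring, ?_⟩
  have hround := mul_le_mul_of_nonneg_right (abs_sub_round (t / π)) pi_pos.le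
  calc |t - round (t / π) * π| = |t / π - round (t / π)| * π := by
        rw [← abs_of_pos pi_pos, ← abs_mul, abs_of_pos pi_pos, sub_mul,
          div_mul_cancel₀ _ pi_ne_zero]
    _ ≤ π / 2 := by linarith

section

variable {b : ℕ} (hb : Odd b)
include hb

theorem cos_odd_pow_mul_add_int_mul_pi (k : ℕ) (θ : ℝ) (j : ℤ) :
    cos ((b : ℝ) ^ k * (θ + j * π)) = (-1) ^ j * cos ((b : ℝ) ^ k * θ) := by
  have hbk : Odd ((b : ℤ) ^ k) := (hb.natCast (R := ℤ)).pow
  rw [mul_add, show (b : ℝ) ^ k * (j * π) = (((b : ℤ) ^ k * j : ℤ) : ℝ) * π by push_cast; ring,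
    cos_add_int_mul_pi, zpow_mul, hbk.neg_one_zpow]

theorem cos_sub_cos_of_pow_mul_eq {m : ℕ} {x y E : ℝ} {α : ℤ}
    (hx : (b : ℝ) ^ m * x = α * π + E) (hy : (b : ℝ) ^ m * y = (α + 1 : ℤ) * π) (k : ℕ) :
    cos ((b : ℝ) ^ (k + m) * y) - cos ((b : ℝ) ^ (k + m) * x)
      = (-1) ^ (α + 1) * (1 + cos ((b : ℝ) ^ k * E)) := by
  rw [pow_add, mul_assoc, mul_assoc, hy, hx, ← zero_add ((α + 1 : ℤ) * π), add_comm _ E,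
    cos_odd_pow_mul_add_int_mul_pi hb, cos_odd_pow_mul_add_int_mul_pi hb, mul_zero, cos_zero,
    zpow_add_one₀ (by norm_num)]
  ring

end

theorem exists_abs_weierstrass_sub_ge {a : ℝ} {b : ℕ} (ha0 : 0 ≤ a) (ha1 : a < 1) (hb : Odd b)
    (hab : 1 < a * b) (x : ℝ) (m : ℕ) :
    ∃ y, x < y ∧ y - x ≤ 3 * π / 2 / (b : ℝ) ^ m ∧
      (1 - 3 * π / (2 * (a * b - 1))) * a ^ m ≤ |weierstrass a b y - weierstrass a b x| := by
  obtain ⟨α, E, hx, hE⟩ := exists_eq_int_mul_pi_add_abs_le ((b : ℝ) ^ m * x)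
  have hbm : (0 : ℝ) < (b : ℝ) ^ m := pow_pos (by exact_mod_cast hb.pos) m
  obtain ⟨y, hyx⟩ : ∃ y, y - x = (π - E) / (b : ℝ) ^ m := ⟨_, add_sub_cancel_left _ _⟩
  have hy : (b : ℝ) ^ m * y = (α + 1 : ℤ) * π := by
    rw [eq_div_iff hbm.ne'] at hyx
    push_cast
    linarith
  have hxy : x < y := by
    rw [← sub_pos, hyx]
    exact div_pos (by linarith [(abs_le.1 hE).2, pi_pos]) hbm
  have hyx_le : y - x ≤ 3 * π / 2 / (b : ℝ) ^ m := by
    rw [hyx]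
    gcongr
    linarith [(abs_le.1 hE).1]
  refine ⟨y, hxy, hyx_le, ?_⟩
  rw [weierstrass_sub_weierstrass ha0 ha1,
    ← (summable_pow_mul_cos_sub_cos ha0 ha1 _ _ _).sum_add_tsum_nat_add m]
  set head := ∑ k ∈ range m, a ^ k * (cos ((b : ℝ) ^ k * y) - cos ((b : ℝ) ^ k * x))
  set tail := ∑' k : ℕ, a ^ (k + m) * (cos ((b : ℝ) ^ (k + m) * y) - cos ((b : ℝ) ^ (k + m) * x))
  have hhead : |head| ≤ 3 * π / (2 * (a * b - 1)) * a ^ m := by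
    have hab0 : 0 < a * b - 1 := sub_pos.2 hab
    calc |head| ≤ (a * b) ^ m / (a * b - 1) * (y - x) :=
          abs_sum_range_pow_mul_cos_sub_cos_le ha0 (Nat.cast_nonneg b) hab hxy.le m
      _ ≤ (a * b) ^ m / (a * b - 1) * (3 * π / 2 / (b : ℝ) ^ m) := by gcongr
      _ = 3 * π / (2 * (a * b - 1)) * a ^ m := by
          field_simp
          ring
  have htail : a ^ m ≤ |tail| := by
    simp_rw [tail, cos_sub_cos_of_pow_mul_eq hb hx hy, mul_left_comm _ ((-1 : ℝ) ^ (α + 1)),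
      tsum_mul_left, abs_mul, abs_zpow, abs_neg, abs_one, one_zpow, one_mul]
    exact (pow_le_tsum_pow_mul_one_add_cos ha0 ha1 _ hE m).trans (le_abs_self _)
  linarith [abs_add' tail head]

theorem weierstrass_right_upper_derivative_infinite_general (a : ℝ) (b : ℕ) (ha : 0 < a) (ha1 : a < 1)
    (hodd : Odd b) (hab : a * b > 1 + 3 * Real.pi / 2) :
    ∀ x : ℝ, ∀ n : ℕ, 0 < n → ∃ y ∈ Set.Ioo x (x + 1 / n),
      |(∑' m : ℕ, a ^ m * Real.cos ((b : ℝ) ^ m * y)) -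
        (∑' m : ℕ, a ^ m * Real.cos ((b : ℝ) ^ m * x))| > n * |y - x| := by
  intro x n hn
  have hab1 : 1 < a * b := by linarith [pi_pos]
  set C := 1 - 3 * π / (2 * (a * b - 1))
  have hC : 0 < C := by
    rw [sub_pos, div_lt_one (by linarith)]
    linarith
  obtain ⟨m, hm⟩ := pow_unbounded_of_one_lt (3 * π * n / (2 * C)) hab1
  obtain ⟨y, hxy, hyx, hW⟩ := exists_abs_weierstrass_sub_ge ha.le ha1 hodd hab1 x m
  have hslope : n * (y - x) < C * a ^ m := by
    have hbm : (0 : ℝ) < (b : ℝ) ^ m := pow_pos (by exact_mod_cast hodd.pos) m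
    rw [div_lt_iff₀ (by positivity), mul_pow] at hm
    calc n * (y - x) ≤ n * (3 * π / 2 / (b : ℝ) ^ m) := by gcongr
      _ < C * a ^ m := by
        rw [← mul_div_assoc, div_lt_iff₀ hbm]
        linarith
  have hCa : C * a ^ m ≤ 1 :=
    mul_le_one₀ (sub_le_self _ (by positivity)) (pow_nonneg ha.le m) (pow_le_one₀ ha.le ha1.le)
  refine ⟨y, ⟨hxy, ?_⟩, ?_⟩
  · rw [← sub_lt_iff_lt_add', lt_div_iff₀' (by exact_mod_cast hn)]
    linarith
  · rw [abs_of_pos (sub_pos.2 hxy)]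
    exact hslope.trans_le hW

theorem weierstrass_right_upper_derivative_infinite (a : ℝ) (b : ℕ) (ha : 0 < a) (ha1 : a < 1)
    (hb : 0 < b) (hodd : Odd b) (hab : a * b > 1 + 3 * Real.pi / 2) :
    ∀ x : ℝ, ∀ n : ℕ, 0 < n → ∃ y ∈ Set.Ioo x (x + 1 / n),
      |(∑' m : ℕ, a ^ m * Real.cos ((b : ℝ) ^ m * y)) -
        (∑' m : ℕ, a ^ m * Real.cos ((b : ℝ) ^ m * x))| > n * |y - x| :=
  weierstrass_right_upper_derivative_infinite_general a b ha ha1 hodd hab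
end

section
/- For each n ∈ ℕ, the set Eₙ = {f ∈ A(D) : Re f restricted to the unit circle, viewed as a 2π-periodic function θ ↦ Re f(e^{iθ}), belongs to Dₙ} is open in the disc algebra A(D) with the supremum norm. -/
open scoped Classical

instance : CompactSpace (Metric.closedBall (0 : ℂ) 1) :=
  isCompact_iff_compactSpace.mp (isCompact_closedBall 0 1)

/-- The disc algebra: continuous functions on the closed unit disc that are
holomorphic on the open unit disc, with the supremum metric (inherited from `C(·,ℂ)`). -/
def DiscAlgebra : Type :=
  {f : C(Metric.closedBall (0 : ℂ) 1, ℂ) //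
    DifferentiableOn ℂ
      (fun z : ℂ => if h : z ∈ Metric.closedBall (0 : ℂ) 1 then f ⟨z, h⟩ else 0)
      (Metric.ball (0 : ℂ) 1)}

noncomputable instance : MetricSpace DiscAlgebra :=
  inferInstanceAs (MetricSpace {f : C(Metric.closedBall (0 : ℂ) 1, ℂ) //
    DifferentiableOn ℂ
      (fun z : ℂ => if h : z ∈ Metric.closedBall (0 : ℂ) 1 then f ⟨z, h⟩ else 0)
      (Metric.ball (0 : ℂ) 1)})

lemma exp_mem_closedBall (θ : ℝ) :
    Complex.exp (θ * Complex.I) ∈ Metric.closedBall (0 : ℂ) 1 := by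
  simp [Metric.mem_closedBall, Complex.dist_eq, Complex.norm_exp_ofReal_mul_I]

/-!
If `u = Re f(e^{iθ})` satisfies the `Dₙ` condition, the excess `|u y - u θ| - n (y - θ)` can be
bounded below by one `δ > 0` for all `θ`: for fixed `δ` the set of `θ` admitting excess `> δ` is
open, these sets increase as `δ ↓ 0` and exhaust `ℝ`, so compactness of `[0, 2π]` and
periodicity give a single `δ`. Every `g` with `‖g - f‖ < δ / 2` perturbs `u` by less than `δ / 2`
pointwise, which cannot destroy an excess of `δ`.
-/

open Set Function

theorem IsCompact.exists_pos_forall_exists_lt {X ι : Type*} [TopologicalSpace X] {K : Set X}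
    (hK : IsCompact K) {F : ι → X → ℝ} (hF : ∀ i, LowerSemicontinuous (F i))
    (h : ∀ x ∈ K, ∃ i, 0 < F i x) : ∃ δ > 0, ∀ x ∈ K, ∃ i, δ < F i x := by
  let U : Ioi (0 : ℝ) → Set X := fun δ => ⋃ i, F i ⁻¹' Ioi δ
  have hU : Antitone U := fun δ₁ δ₂ hδ =>
    iUnion_mono fun i x (hx : δ₂ < F i x) => (show (δ₁ : ℝ) < F i x from lt_of_le_of_lt hδ hx)
  obtain ⟨⟨δ, hδ⟩, hKU⟩ := hK.elim_directed_cover U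
    (fun δ => isOpen_iUnion fun i => (hF i).isOpen_preimage δ)
    (fun x hx => by
      obtain ⟨i, hi⟩ := h x hx
      exact mem_iUnion.2 ⟨⟨F i x / 2, half_pos hi⟩, mem_iUnion.2 ⟨i, half_lt_self hi⟩⟩)
    hU.directed_le
  exact ⟨δ, hδ, fun x hx => mem_iUnion.1 (hKU hx)⟩

theorem exists_pos_forall_exists_lt_of_periodic {ι : Type*} {F : ι → ℝ → ℝ} {T : ℝ}
    (hT : 0 < T) (hF : ∀ i, LowerSemicontinuous (F i)) (hper : ∀ i, Periodic (F i) T)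
    (h : ∀ x, ∃ i, 0 < F i x) : ∃ δ > 0, ∀ x, ∃ i, δ < F i x := by
  obtain ⟨δ, hδ, hK⟩ := isCompact_Icc.exists_pos_forall_exists_lt hF fun x _ => h x
  refine ⟨δ, hδ, fun x => ?_⟩
  have hperF : Periodic (fun x i => F i x) T := fun x => funext fun i => hper i x
  obtain ⟨y, hy, hxy⟩ := hperF.exists_mem_Ico₀ hT x
  obtain ⟨i, hi⟩ := hK y (Ico_subset_Icc_self hy)
  exact ⟨i, by rwa [show F i x = F i y from congrFun hxy i]⟩

theorem Function.Periodic.exists_uniform_margin {u : ℝ → ℝ} {T r c : ℝ} (hper : Periodic u T)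
    (hT : 0 < T) (hu : Continuous u) (h : ∀ θ, ∃ y ∈ Ioo θ (θ + r), c * |y - θ| < |u y - u θ|) :
    ∃ δ > 0, ∀ θ, ∃ y ∈ Ioo θ (θ + r), c * |y - θ| + δ < |u y - u θ| := by
  let F : Ioo (0 : ℝ) r → ℝ → ℝ := fun t θ => |u (θ + t) - u θ| - c * t
  have hF : ∀ t, LowerSemicontinuous (F t) := fun t =>
    (by fun_prop : Continuous (F t)).lowerSemicontinuous
  have hperF : ∀ t, Periodic (F t) T := fun t θ => by
    simp only [F, add_right_comm θ T, hper (θ + t), hper θ]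
  obtain ⟨δ, hδ, hmargin⟩ := exists_pos_forall_exists_lt_of_periodic hT hF hperF fun θ => by
    obtain ⟨y, hy, hlt⟩ := h θ
    refine ⟨⟨y - θ, sub_pos.2 hy.1, by linarith [hy.2]⟩, ?_⟩
    rw [abs_of_pos (sub_pos.2 hy.1)] at hlt
    simpa [F] using hlt
  refine ⟨δ, hδ, fun θ => ?_⟩
  obtain ⟨⟨t, ht₀, htr⟩, hlt⟩ := hmargin θ
  refine ⟨θ + t, ⟨by linarith, by linarith⟩, ?_⟩
  rw [add_sub_cancel_left, abs_of_pos ht₀]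
  simp only [F] at hlt
  linarith

theorem forall_exists_lt_abs_sub_of_abs_sub_lt {u v : ℝ → ℝ} {r c δ : ℝ}
    (hu : ∀ θ, ∃ y ∈ Ioo θ (θ + r), c * |y - θ| + δ < |u y - u θ|)
    (hv : ∀ x, |v x - u x| < δ / 2) :
    ∀ θ, ∃ y ∈ Ioo θ (θ + r), c * |y - θ| < |v y - v θ| := by
  intro θ
  obtain ⟨y, hy, hlt⟩ := hu θ
  refine ⟨y, hy, ?_⟩
  have key := abs_add_three (u y - v y) (v y - v θ) (v θ - u θ)
  rw [show u y - v y + (v y - v θ) + (v θ - u θ) = u y - u θ by ring,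
    abs_sub_comm (u y) (v y)] at key
  linarith [hv y, hv θ]

namespace DiscAlgebra

noncomputable def boundaryRe (f : DiscAlgebra) (θ : ℝ) : ℝ :=
  (f.1 ⟨Complex.exp (θ * Complex.I), exp_mem_closedBall θ⟩).re

theorem continuous_boundaryRe (f : DiscAlgebra) : Continuous f.boundaryRe :=
  Complex.continuous_re.comp <| f.1.continuous.comp <| by fun_prop

theorem periodic_boundaryRe (f : DiscAlgebra) : Periodic f.boundaryRe (2 * Real.pi) := fun θ => by
  unfold boundaryRe
  congr 3
  push_cast
  exact Complex.exp_mul_I_periodic θ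

theorem abs_boundaryRe_sub_le_dist (f g : DiscAlgebra) (θ : ℝ) :
    |g.boundaryRe θ - f.boundaryRe θ| ≤ dist g f :=
  calc |g.boundaryRe θ - f.boundaryRe θ|
      _ ≤ dist (g.1 _) (f.1 _) := by
        rw [boundaryRe, boundaryRe, ← Complex.sub_re, Complex.dist_eq]
        exact Complex.abs_re_le_norm _
      _ ≤ dist g.1 f.1 := ContinuousMap.dist_apply_le_dist _
      _ = dist g f := (Subtype.dist_eq g f).symm

end DiscAlgebra

theorem En_isOpen_general (n : ℕ) :
    IsOpen {f : DiscAlgebra | ∀ θ : ℝ, ∃ y ∈ Set.Ioo θ (θ + 1 / n),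
      |(f.1 ⟨Complex.exp (y * Complex.I), exp_mem_closedBall y⟩).re -
        (f.1 ⟨Complex.exp (θ * Complex.I), exp_mem_closedBall θ⟩).re| > n * |y - θ|} := by
  rw [Metric.isOpen_iff]
  intro f hf
  obtain ⟨δ, hδ, hmargin⟩ := f.periodic_boundaryRe.exists_uniform_margin Real.two_pi_pos
    f.continuous_boundaryRe hf
  exact ⟨δ / 2, half_pos hδ, fun g hg => forall_exists_lt_abs_sub_of_abs_sub_lt hmargin
    fun θ => (f.abs_boundaryRe_sub_le_dist g θ).trans_lt hg⟩

theorem En_isOpen (n : ℕ) (hn : 0 < n) :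
    IsOpen {f : DiscAlgebra | ∀ θ : ℝ, ∃ y ∈ Set.Ioo θ (θ + 1 / n),
      |(f.1 ⟨Complex.exp (y * Complex.I), exp_mem_closedBall y⟩).re -
        (f.1 ⟨Complex.exp (θ * Complex.I), exp_mem_closedBall θ⟩).re| > n * |y - θ|} :=
  En_isOpen_general n
end

section
/- If u : ℝ → ℝ belongs to Dₙ for every n ∈ ℕ, then u is not differentiable at any point of ℝ. -/
/-!
A function differentiable at `x` satisfies `‖u y - u x‖ ≤ c |y - x|` for some `c` and all `y` near
`x`. Membership in `Dₙ` for every `n` produces, at every point `x`, points `y` arbitrarily close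
to `x` with `‖u y - u x‖ > n |y - x|` for arbitrarily large `n`, so no such bound can hold.
-/

/-- The set `Dₙ` of continuous `2π`-periodic functions with large difference
quotients at scale `1/n` near every point. -/
def Dset (n : ℕ) : Set (ℝ → ℝ) :=
  {u | Continuous u ∧ Function.Periodic u (2 * Real.pi) ∧
    ∀ θ : ℝ, ∃ y ∈ Set.Ioo θ (θ + 1 / n), |u y - u θ| > n * |y - θ|}

open Asymptotics Filter Topology

theorem not_isBigO_sub_of_forall_exists_steep {F : Type*} [NormedAddCommGroup F] {u : ℝ → F}
    {x : ℝ} (hsteep : ∀ n : ℕ, 0 < n → ∃ y ∈ Set.Ioo x (x + 1 / n), n * |y - x| < ‖u y - u x‖) :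
    ¬ (fun y => u y - u x) =O[𝓝 x] (fun y => y - x) := by
  intro hO
  obtain ⟨c, hc⟩ := hO.bound
  obtain ⟨δ, hδ, hbound⟩ := Metric.eventually_nhds_iff.mp hc
  obtain ⟨n, hn⟩ := exists_nat_gt (max c (1 / δ))
  have hcn : c < n := (le_max_left _ _).trans_lt hn
  have hδn : 1 / δ < n := (le_max_right _ _).trans_lt hn
  have hn_pos : (0 : ℝ) < n := (one_div_pos.mpr hδ).trans hδn
  have hnδ : 1 / (n : ℝ) < δ := (one_div_lt hδ hn_pos).mp hδn
  obtain ⟨y, ⟨hxy, hyx⟩, hy⟩ := hsteep n (Nat.cast_pos.mp hn_pos)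
  have hdist : dist y x < δ := by
    rw [Real.dist_eq, abs_of_pos (sub_pos.mpr hxy)]
    linarith
  have hle : ‖u y - u x‖ ≤ c * |y - x| := by
    simpa only [Real.norm_eq_abs] using hbound hdist
  have : c * |y - x| ≤ n * |y - x| := mul_le_mul_of_nonneg_right hcn.le (abs_nonneg _)
  linarith

theorem not_differentiableAt_of_forall_exists_steep {F : Type*} [NormedAddCommGroup F]
    [NormedSpace ℝ F] {u : ℝ → F} {x : ℝ}
    (hsteep : ∀ n : ℕ, 0 < n → ∃ y ∈ Set.Ioo x (x + 1 / n), n * |y - x| < ‖u y - u x‖) :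
    ¬ DifferentiableAt ℝ u x :=
  fun hu => not_isBigO_sub_of_forall_exists_steep hsteep hu.isBigO_sub

theorem mem_all_Dn_nowhere_differentiable (u : ℝ → ℝ)
    (hu : ∀ n : ℕ, 0 < n → u ∈ Dset n) :
    ∀ x : ℝ, ¬ DifferentiableAt ℝ u x := fun x =>
  not_differentiableAt_of_forall_exists_steep fun n hn => by
    simpa only [Real.norm_eq_abs] using (hu n hn).2.2 x
end

section
/- If u belongs to Dₙ for some n, and p : ℝ → ℝ is continuously differentiable with |p′| bounded by M, then u + p belongs to Dₘ for every m with m ≤ n − M. In particular, if u ∈ Dₙ for all n, then u + p ∈ Dₘ for all m ∈ ℕ. -/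
/-!
A perturbation `p` with Lipschitz constant `K` changes every difference quotient by at most `K`,
so at the point `y` witnessing `u ∈ Dₙ` near `θ` the quotient of `u + p` still exceeds `n - K ≥ m`;
and `y` lies within `1/n ≤ 1/m` of `θ`. For the second claim apply the first with `n = m + ⌈M⌉`.
-/

open NNReal

theorem mul_lt_abs_add_of_mul_lt_abs {a b t n m K : ℝ} (ha : n * t < |a|) (hb : |b| ≤ K * t)
    (ht : 0 ≤ t) (hmn : m ≤ n - K) : m * t < |a + b| :=
  calc m * t ≤ (n - K) * t := mul_le_mul_of_nonneg_right hmn ht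
    _ < |a| - |b| := by linarith
    _ ≤ |a + b| := by simpa using abs_sub_abs_le_abs_sub a (-b)

theorem add_mem_Dset_of_lipschitzWith {u p : ℝ → ℝ} {n m : ℕ} {K : ℝ≥0} (hu : u ∈ Dset n)
    (hp : LipschitzWith K p) (hpper : Function.Periodic p (2 * Real.pi)) (hm : 0 < m)
    (hmn : (m : ℝ) ≤ n - K) : u + p ∈ Dset m := by
  obtain ⟨hcont, hper, hquot⟩ := hu
  refine ⟨hcont.add hp.continuous, hper.add hpper, fun θ => ?_⟩
  obtain ⟨y, ⟨hθy, hyn⟩, hy⟩ := hquot θ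
  have hpy : |p y - p θ| ≤ K * |y - θ| := by
    simpa only [Real.dist_eq] using hp.dist_le_mul y θ
  have hscale : (1 : ℝ) / n ≤ 1 / m :=
    one_div_le_one_div_of_le (by exact_mod_cast hm) (by linarith [K.coe_nonneg])
  refine ⟨y, ⟨hθy, hyn.trans_le (by linarith)⟩, ?_⟩
  have := mul_lt_abs_add_of_mul_lt_abs hy hpy (abs_nonneg _) hmn
  simpa only [Pi.add_apply, add_sub_add_comm] using this

theorem Dn_add_smooth_general (u p : ℝ → ℝ) (M : ℝ)
    (hp : ContDiff ℝ 1 p) (hpper : Function.Periodic p (2 * Real.pi))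
    (hp' : ∀ x : ℝ, |deriv p x| ≤ M) :
    (∀ n : ℕ, 0 < n → u ∈ Dset n →
      ∀ m : ℕ, 0 < m → (m : ℝ) ≤ (n : ℝ) - M → u + p ∈ Dset m) ∧
    ((∀ n : ℕ, 0 < n → u ∈ Dset n) → ∀ m : ℕ, 0 < m → u + p ∈ Dset m) := by
  have hM : 0 ≤ M := (abs_nonneg _).trans (hp' 0)
  have hlip : LipschitzWith ⟨M, hM⟩ p :=
    lipschitzWith_of_nnnorm_deriv_le (hp.differentiable one_ne_zero) fun x => hp' x
  have hsmall : ∀ n : ℕ, 0 < n → u ∈ Dset n →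
      ∀ m : ℕ, 0 < m → (m : ℝ) ≤ (n : ℝ) - M → u + p ∈ Dset m :=
    fun n _ hu m hm hmn => add_mem_Dset_of_lipschitzWith hu hlip hpper hm hmn
  refine ⟨hsmall, fun hall m hm => ?_⟩
  refine hsmall (m + ⌈M⌉₊) (by omega) (hall _ (by omega)) m hm ?_
  push_cast
  linarith [Nat.le_ceil M]

theorem Dn_add_smooth (u p : ℝ → ℝ) (M : ℝ) (hM : 0 < M)
    (hp : ContDiff ℝ 1 p) (hpper : Function.Periodic p (2 * Real.pi))
    (hp' : ∀ x : ℝ, |deriv p x| ≤ M) :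
    (∀ n : ℕ, 0 < n → u ∈ Dset n →
      ∀ m : ℕ, 0 < m → (m : ℝ) ≤ (n : ℝ) - M → u + p ∈ Dset m) ∧
    ((∀ n : ℕ, 0 < n → u ∈ Dset n) → ∀ m : ℕ, 0 < m → u + p ∈ Dset m) :=
  Dn_add_smooth_general u p M hp hpper hp'
end

section
/- Generically, for f in the disc algebra A(D), both the real part u(θ) = Re f(e^{iθ}) and the imaginary part ũ(θ) = Im f(e^{iθ}) are nowhere differentiable functions of θ ∈ ℝ: the set of such f contains a dense G_δ subset of A(D). -/
open scoped Classical

/-- The boundary values of `f ∈ A(D)`, as a `2π`-periodic function of `θ`. -/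
noncomputable def bdry (f : DiscAlgebra) (θ : ℝ) : ℂ :=
  f.1 ⟨Complex.exp (θ * Complex.I), exp_mem_closedBall θ⟩

/-- The set `S = ⋂ₙ Eₙ` of disc algebra functions whose boundary real part
belongs to every `Dₙ`. -/
def Sset : Set DiscAlgebra :=
  {f | ∀ n : ℕ, 0 < n → ∀ θ : ℝ, ∃ y ∈ Set.Ioo θ (θ + 1 / n),
    |(bdry f y).re - (bdry f θ).re| > n * |y - θ|}

/-!
Baire category argument. For a real functional `ℓ ∈ {Re, Im}` and `n ≥ 1`, call a boundary
function `u = ℓ(f(e^{i·}))` `n`-steep if every `θ` has a `y ∈ (θ, θ + 1/n)` with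
`n |y - θ| < |u y - u θ|`; a function that is `n`-steep for every `n` is nowhere differentiable.
Being `n`-steep with a positive margin survives small uniform perturbations, which yields an
open set, and it is dense: adding `δ zᵐ` to `f` makes `u` oscillate by `δ` on every interval of
length `2π/m`, and for `m` large this beats both the modulus of continuity of `u` and the
slope `n`.
Since `A(D)` is complete, Baire's theorem makes the intersection over `n` a dense `G_δ`.
-/

open Set Filter Topology Metric Complex Function
open scoped Real

def HasSteepChords (n : ℕ) (η : ℝ) (u : ℝ → ℝ) : Prop :=
  ∀ θ : ℝ, ∃ y ∈ Ioo θ (θ + 1 / n), n * |y - θ| + η < |u y - u θ|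

theorem HasSteepChords.of_abs_sub_le {n : ℕ} {η ε : ℝ} {u v : ℝ → ℝ}
    (hu : HasSteepChords n η u) (hv : ∀ t, |v t - u t| ≤ ε) :
    HasSteepChords n (η - 2 * ε) v := by
  intro θ
  obtain ⟨y, hy, hlt⟩ := hu θ
  refine ⟨y, hy, ?_⟩
  have hsplit : |u y - u θ| ≤ |v y - v θ| + |u y - v y| + |v θ - u θ| := by
    calc |u y - u θ| = |(v y - v θ) + (u y - v y) + (v θ - u θ)| := by ring_nf
      _ ≤ _ := abs_add_three _ _ _
  rw [abs_sub_comm (u y) (v y)] at hsplit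
  linarith [hv y, hv θ]

theorem not_differentiableAt_of_frequently_lt {𝕜 E F : Type*} [NontriviallyNormedField 𝕜]
    [NormedAddCommGroup E] [NormedSpace 𝕜 E] [NormedAddCommGroup F] [NormedSpace 𝕜 F]
    {f : E → F} {x : E} (h : ∀ C : ℝ, ∃ᶠ y in 𝓝 x, C * ‖y - x‖ < ‖f y - f x‖) :
    ¬ DifferentiableAt 𝕜 f x := by
  intro hf
  obtain ⟨C, hC⟩ := hf.isBigO_sub.bound
  obtain ⟨y, hlt, hle⟩ := ((h C).and_eventually hC).exists
  exact hlt.not_ge hle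

theorem frequently_lt_of_hasSteepChords {u : ℝ → ℝ}
    (hu : ∀ n : ℕ, HasSteepChords (n + 1) 0 u) (θ C : ℝ) :
    ∃ᶠ y in 𝓝 θ, C * ‖y - θ‖ < ‖u y - u θ‖ := by
  refine nhds_basis_ball.frequently_iff.2 fun ε hε => ?_
  obtain ⟨n, hn⟩ := exists_nat_gt (max C ε⁻¹)
  obtain ⟨y, ⟨hθy, hyθ⟩, hlt⟩ := hu n θ
  push_cast at hyθ hlt
  have hCn : C ≤ n + 1 := by linarith [le_max_left C ε⁻¹]
  have hnε : 1 / ((n : ℝ) + 1) < ε := by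
    rw [one_div]
    exact (inv_lt_comm₀ hε (by positivity)).1 (by linarith [le_max_right C ε⁻¹])
  refine ⟨y, ?_, ?_⟩
  · rw [mem_ball, Real.dist_eq, abs_of_pos (sub_pos.2 hθy)]
    linarith
  · rw [Real.norm_eq_abs, Real.norm_eq_abs]
    nlinarith [abs_nonneg (y - θ)]

theorem Function.Periodic.exists_mem_Ioc_one_le_abs_sub {p : ℝ → ℝ} {T : ℝ}
    (hp : Periodic p T) (hT : 0 < T) (h₁ : 1 ∈ range p) (h₂ : -1 ∈ range p) (a c : ℝ) :
    ∃ s ∈ Ioc a (a + T), 1 ≤ |p s - c| := by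
  rw [← hp.image_Ioc hT a] at h₁ h₂
  obtain ⟨s₁, hs₁, hp₁⟩ := h₁
  obtain ⟨s₂, hs₂, hp₂⟩ := h₂
  rcases le_or_gt c 0 with hc | hc
  · exact ⟨s₁, hs₁, by rw [hp₁]; exact le_abs.2 (Or.inl (by linarith))⟩
  · exact ⟨s₂, hs₂, by rw [hp₂]; exact le_abs.2 (Or.inr (by linarith))⟩

theorem UniformContinuous.eventually_hasSteepChords_add_mul_comp_mul {u p : ℝ → ℝ}
    {T δ : ℝ} (hu : UniformContinuous u) (hp : Periodic p T) (hT : 0 < T) (h₁ : 1 ∈ range p)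
    (h₂ : -1 ∈ range p) (hδ : 0 < δ) {n : ℕ} (hn : 0 < n) :
    ∀ᶠ m : ℕ in atTop, HasSteepChords n (δ / 4) fun t => u t + δ * p (m * t) := by
  obtain ⟨τ, hτ, hu⟩ := Metric.uniformContinuous_iff.1 hu (δ / 8) (by positivity)
  have hn' : (0 : ℝ) < n := Nat.cast_pos.2 hn
  have hwidth := tendsto_const_div_atTop_nhds_zero_nat T
  filter_upwards [hwidth.eventually (gt_mem_nhds hτ),
    hwidth.eventually (gt_mem_nhds (one_div_pos.2 hn')),
    hwidth.eventually (gt_mem_nhds (by positivity : 0 < δ / (2 * n))), eventually_gt_atTop 0]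
    with m hwτ hwn hwδ hm θ
  have hM : (0 : ℝ) < m := Nat.cast_pos.2 hm
  obtain ⟨s, ⟨hs₁, hs₂⟩, hosc⟩ :=
    hp.exists_mem_Ioc_one_le_abs_sub hT h₁ h₂ (m * θ) (p (m * θ))
  have hθy : θ < s / m := by rwa [lt_div_iff₀ hM, mul_comm]
  have hyθ : s / m - θ ≤ T / m := by
    rw [sub_le_iff_le_add, div_le_iff₀ hM, add_mul, div_mul_cancel₀ _ hM.ne', mul_comm]
    linarith
  have hys : (m : ℝ) * (s / m) = s := mul_div_cancel₀ s hM.ne'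
  refine ⟨s / m, ⟨hθy, by linarith⟩, ?_⟩
  rw [← hys] at hosc
  set A := u (s / m) - u θ
  set B := p (m * (s / m)) - p (m * θ)
  have hA : |A| < δ / 8 := by
    have hdist : dist (s / m) θ < τ := by
      rw [Real.dist_eq, abs_of_pos (sub_pos.2 hθy)]
      linarith
    simpa only [Real.dist_eq] using hu hdist
  have hB : δ ≤ |δ * B| := by
    rw [abs_mul, abs_of_pos hδ]
    nlinarith
  have hslope : n * |s / m - θ| < δ / 2 := by
    rw [abs_of_pos (sub_pos.2 hθy)]
    calc n * (s / m - θ) ≤ n * (T / m) := by gcongr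
      _ < n * (δ / (2 * n)) := by gcongr
      _ = δ / 2 := by field_simp
  have hsum : |δ * B| ≤ |A + δ * B| + |A| := by
    simpa using abs_sub (A + δ * B) A
  have heq : u (s / m) + δ * p (m * (s / m)) - (u θ + δ * p (m * θ)) = A + δ * B := by ring
  rw [heq]
  linarith

theorem lipschitzWith_exp_mul_I : LipschitzWith 1 fun x : ℝ => exp (x * I) := by
  refine LipschitzWith.of_dist_le_mul fun x y => ?_
  have hsplit : exp (x * I) - exp (y * I) = exp (y * I) * (exp (I * ↑(x - y)) - 1) := by
    rw [mul_sub, ← exp_add]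
    push_cast
    ring_nf
  rw [dist_eq, hsplit, norm_mul, norm_exp_ofReal_mul_I, one_mul, NNReal.coe_one, one_mul,
    Real.dist_eq, ← Real.norm_eq_abs]
  exact Real.norm_exp_I_mul_ofReal_sub_one_le

theorem isClosed_setOf_differentiableOn_extend {K U : Set ℂ} [CompactSpace K] (hU : IsOpen U)
    (hUK : U ⊆ K) :
    IsClosed
      {F : C(K, ℂ) | DifferentiableOn ℂ (fun z => if h : z ∈ K then F ⟨z, h⟩ else 0) U} := by
  set S := {F : C(K, ℂ) | DifferentiableOn ℂ (fun z => if h : z ∈ K then F ⟨z, h⟩ else 0) U}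
  refine isClosed_of_closure_subset fun F hF => ?_
  have : (𝓝[S] F).NeBot := mem_closure_iff_nhdsWithin_neBot.1 hF
  have hunif := ContinuousMap.tendsto_iff_tendstoUniformly.1 (tendsto_id (x := 𝓝 F))
  refine TendstoUniformlyOn.tendstoLocallyUniformlyOn (p := 𝓝[S] F)
    (F := fun (G : C(K, ℂ)) z => if h : z ∈ K then G ⟨z, h⟩ else 0) ?_ |>.differentiableOn
    (eventually_nhdsWithin_of_forall fun (G : C(K, ℂ)) (hG : G ∈ S) => hG) hU
  rw [Metric.tendstoUniformlyOn_iff]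
  intro ε hε
  filter_upwards [nhdsWithin_le_nhds (Metric.tendstoUniformly_iff.1 hunif ε hε)] with G hG z hz
  simpa [dif_pos (hUK hz)] using hG ⟨z, hUK hz⟩

instance : CompleteSpace DiscAlgebra :=
  (isClosed_setOf_differentiableOn_extend isOpen_ball ball_subset_closedBall).completeSpace_coe

namespace DiscAlgebra

theorem norm_bdry_sub_le (f g : DiscAlgebra) (θ : ℝ) :
    ‖bdry f θ - bdry g θ‖ ≤ dist f g := by
  rw [← dist_eq_norm]
  exact ContinuousMap.dist_apply_le_dist _

theorem uniformContinuous_bdry (f : DiscAlgebra) : UniformContinuous (bdry f) :=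
  (CompactSpace.uniformContinuous_of_continuous f.1.continuous).comp
    (lipschitzWith_exp_mul_I.uniformContinuous.subtype_mk _)

noncomputable def addMonomial (f : DiscAlgebra) (c : ℂ) (m : ℕ) : DiscAlgebra :=
  ⟨f.1 + ⟨fun z => c * (z : ℂ) ^ m, continuous_const.mul (continuous_subtype_val.pow m)⟩, by
    refine (f.2.add (by fun_prop : DifferentiableOn ℂ (fun z : ℂ => c * z ^ m) _)).congr ?_
    intro z hz
    simp only [Pi.add_apply, ContinuousMap.add_apply, ContinuousMap.coe_mk,
      dif_pos (ball_subset_closedBall hz)]⟩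

theorem bdry_addMonomial (f : DiscAlgebra) (c : ℂ) (m : ℕ) (θ : ℝ) :
    bdry (f.addMonomial c m) θ = bdry f θ + c * exp (↑(m * θ) * I) := by
  simp only [bdry, addMonomial, ContinuousMap.add_apply, ContinuousMap.coe_mk, ← exp_nat_mul]
  push_cast
  ring_nf

theorem dist_addMonomial_le (f : DiscAlgebra) (c : ℂ) (m : ℕ) :
    dist (f.addMonomial c m) f ≤ ‖c‖ := by
  refine (ContinuousMap.dist_le (norm_nonneg c)).2 fun z => ?_
  have hz : ‖(z : ℂ)‖ ≤ 1 := mem_closedBall_zero_iff.1 z.2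
  simp only [addMonomial, ContinuousMap.add_apply, ContinuousMap.coe_mk]
  rw [dist_eq_norm, add_sub_cancel_left, norm_mul, norm_pow]
  exact mul_le_of_le_one_right (norm_nonneg c) (pow_le_one₀ (norm_nonneg _) hz)

/-- Open by construction; the radius is half the margin so that its members remain steep. -/
def steepSet (ℓ : ℂ →L[ℝ] ℝ) (n : ℕ) : Set DiscAlgebra :=
  ⋃ (g : DiscAlgebra) (η : ℝ) (_ : HasSteepChords n η (ℓ ∘ bdry g)), ball g (η / 2)

theorem isOpen_steepSet (ℓ : ℂ →L[ℝ] ℝ) (n : ℕ) : IsOpen (steepSet ℓ n) :=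
  isOpen_iUnion fun _ => isOpen_iUnion fun _ => isOpen_iUnion fun _ => isOpen_ball

theorem hasSteepChords_of_mem_steepSet {ℓ : ℂ →L[ℝ] ℝ} (hℓ : ‖ℓ‖ ≤ 1) {n : ℕ}
    {f : DiscAlgebra} (hf : f ∈ steepSet ℓ n) : HasSteepChords n 0 (ℓ ∘ bdry f) := by
  simp only [steepSet, mem_iUnion] at hf
  obtain ⟨g, η, hg, hfg⟩ := hf
  have hclose : ∀ t, |ℓ (bdry f t) - ℓ (bdry g t)| ≤ η / 2 := fun t =>
    calc |ℓ (bdry f t) - ℓ (bdry g t)| = ‖ℓ (bdry f t - bdry g t)‖ := by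
          rw [map_sub, Real.norm_eq_abs]
      _ ≤ 1 * ‖bdry f t - bdry g t‖ := ℓ.le_of_opNorm_le hℓ _
      _ ≤ η / 2 := by rw [one_mul]; exact (norm_bdry_sub_le f g t).trans (mem_ball.1 hfg).le
  have := hg.of_abs_sub_le hclose
  rwa [mul_div_cancel₀ _ two_ne_zero, sub_self] at this

theorem dense_steepSet {ℓ : ℂ →L[ℝ] ℝ} (h₁ : 1 ∈ range fun s : ℝ => ℓ (exp (s * I)))
    (h₂ : -1 ∈ range fun s : ℝ => ℓ (exp (s * I))) {n : ℕ} (hn : 0 < n) :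
    Dense (steepSet ℓ n) := by
  refine Metric.dense_iff.2 fun f ε hε => ?_
  have hδ : 0 < ε / 2 := half_pos hε
  have hper : Periodic (fun s : ℝ => exp (s * I)) (2 * π) := fun s => by
    simpa using exp_mul_I_periodic (s : ℂ)
  obtain ⟨m, hm⟩ := ((ℓ.uniformContinuous.comp (uniformContinuous_bdry f)
    ).eventually_hasSteepChords_add_mul_comp_mul (hper.comp ℓ) Real.two_pi_pos h₁ h₂ hδ hn).exists
  have hg : ℓ ∘ bdry (f.addMonomial ((ε / 2 : ℝ) : ℂ) m) =
      fun t => ℓ (bdry f t) + ε / 2 * ℓ (exp (↑(m * t) * I)) := by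
    funext t
    simp only [comp_apply, bdry_addMonomial, map_add, ← real_smul, map_smul, smul_eq_mul]
  refine ⟨f.addMonomial ((ε / 2 : ℝ) : ℂ) m, ?_, ?_⟩
  · rw [mem_ball]
    refine (dist_addMonomial_le f _ m).trans_lt ?_
    rw [norm_real, Real.norm_of_nonneg hδ.le]
    linarith
  · simp only [steepSet, mem_iUnion]
    exact ⟨_, ε / 2 / 4, by rw [hg]; exact_mod_cast hm, mem_ball_self (by positivity)⟩

theorem exists_isGδ_dense_forall_not_differentiableAt {ℓ : ℂ →L[ℝ] ℝ} (hℓ : ‖ℓ‖ ≤ 1)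
    (h₁ : 1 ∈ range fun s : ℝ => ℓ (exp (s * I)))
    (h₂ : -1 ∈ range fun s : ℝ => ℓ (exp (s * I))) :
    ∃ G : Set DiscAlgebra, IsGδ G ∧ Dense G ∧
      ∀ f ∈ G, ∀ θ : ℝ, ¬ DifferentiableAt ℝ (fun t => ℓ (bdry f t)) θ :=
  ⟨⋂ n : ℕ, steepSet ℓ (n + 1), .iInter_of_isOpen fun _ => isOpen_steepSet _ _,
    dense_iInter_of_isOpen_nat (fun _ => isOpen_steepSet _ _)
      fun n => dense_steepSet h₁ h₂ n.succ_pos,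
    fun _ hf θ => not_differentiableAt_of_frequently_lt <| frequently_lt_of_hasSteepChords
      (fun n => hasSteepChords_of_mem_steepSet hℓ (mem_iInter.1 hf n)) θ⟩

end DiscAlgebra

/-- Generically, for `f` in the disc algebra both the real and imaginary parts of the
boundary values `θ ↦ f(e^{iθ})` are nowhere differentiable. -/
theorem generic_nowhere_differentiable_discAlgebra :
    ∃ G : Set DiscAlgebra, IsGδ G ∧ Dense G ∧
      ∀ f ∈ G, ∀ θ : ℝ,
        ¬ DifferentiableAt ℝ (fun t : ℝ => (bdry f t).re) θ ∧
        ¬ DifferentiableAt ℝ (fun t : ℝ => (bdry f t).im) θ := by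
  obtain ⟨G₁, hG₁, hd₁, hre⟩ := DiscAlgebra.exists_isGδ_dense_forall_not_differentiableAt
    reCLM_norm.le ⟨0, by simp⟩ ⟨π, by simp⟩
  obtain ⟨G₂, hG₂, hd₂, him⟩ := DiscAlgebra.exists_isGδ_dense_forall_not_differentiableAt
    imCLM_norm.le ⟨π / 2, by simp⟩
    ⟨-(π / 2), by simp only [imCLM_apply, exp_ofReal_mul_I_im, Real.sin_neg, Real.sin_pi_div_two]⟩
  exact ⟨G₁ ∩ G₂, hG₁.inter hG₂, hd₁.inter_of_Gδ hG₁ hG₂ hd₂,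
    fun f hf θ => ⟨hre f hf.1 θ, him f hf.2 θ⟩⟩
end

section
/- Let I be a finite or countably infinite set. The set of functions f ∈ A(D^I) such that for every point θ ∈ ℝ^I and every direction v ∈ ℝ^I with ‖v‖_∞ = 1, neither u(θ) = Re f(e^{iθ}) nor ũ(θ) = Im f(e^{iθ}) has a directional derivative at θ in direction v (i.e. the limit of (u(θ+tv) − u(θ))/t as t → 0 does not exist in ℝ), contains a dense G_δ subset of A(D^I); in particular such functions exist. -/
open scoped Classical

noncomputable section

variable (I : Type*)

/-- The closed unit polydisc `D̄^I ⊆ ℂ^I`, with the product topology. -/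
def PolyDisc : Set (I → ℂ) := Set.univ.pi fun _ : I => Metric.closedBall (0 : ℂ) 1

instance : CompactSpace (PolyDisc I) :=
  isCompact_iff_compactSpace.mp
    (isCompact_univ_pi fun _ => isCompact_closedBall (0 : ℂ) 1)

variable {I}

/-- Extension of a continuous function on the closed polydisc by `0`. -/
def ext (f : C(PolyDisc I, ℂ)) (z : I → ℂ) : ℂ :=
  if h : z ∈ PolyDisc I then f ⟨z, h⟩ else 0

variable (I)

/-- The polydisc algebra `A(D^I)`: functions continuous on the closed polydisc
(product topology) and separately holomorphic on the open polydisc, with the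
supremum metric inherited from `C(D̄^I, ℂ)`. -/
def PolyDiscAlgebra : Type _ :=
  {f : C(PolyDisc I, ℂ) //
    ∀ (i : I) (z : I → ℂ), (∀ j, ‖z j‖ < 1) →
      DifferentiableAt ℂ (fun w : ℂ => ext f (Function.update z i w)) (z i)}

instance : MetricSpace (PolyDiscAlgebra I) :=
  inferInstanceAs (MetricSpace {f : C(PolyDisc I, ℂ) //
    ∀ (i : I) (z : I → ℂ), (∀ j, ‖z j‖ < 1) →
      DifferentiableAt ℂ (fun w : ℂ => ext f (Function.update z i w)) (z i)})

variable {I}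

lemma exp_mem_polyDisc (θ : I → ℝ) :
    (fun i => Complex.exp (θ i * Complex.I)) ∈ PolyDisc I := by
  intro i _
  simp [Metric.mem_closedBall, Complex.dist_eq, Complex.norm_exp_ofReal_mul_I]

/-- The boundary values of `f ∈ A(D^I)` on the distinguished boundary `𝕋^I`,
parametrized by `θ ∈ ℝ^I`. -/
def pbdry (f : PolyDiscAlgebra I) (θ : I → ℝ) : ℂ :=
  f.1 ⟨fun i => Complex.exp (θ i * Complex.I), exp_mem_polyDisc θ⟩

/-- `‖v‖_∞ = 1` for `v ∈ ℝ^I`: all coordinates are bounded by `1` in absolute value,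
and their supremum is `1`. -/
def SupNormOne (v : I → ℝ) : Prop :=
  (∀ i, |v i| ≤ 1) ∧ ∀ ε : ℝ, 0 < ε → ∃ i, 1 - ε < |v i|

/-!
`A(D^I)` is closed in `C(D̄^I, ℂ)` (locally uniform limits of holomorphic functions are
holomorphic), hence a Baire space. Fix `n ∈ ℕ` and `i ∈ I`. Adding `c z_i^M` to `f` with `M` large
makes the boundary values jump by about `c`, in real and in imaginary part, over a step of length
`O(1/M)` in any direction `v` with `|v_i| ≥ 1/2`, while `f` itself, being uniformly continuous on
`𝕋^I`, barely moves over such a step. The jump survives perturbations of size `c/8`, so the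
functions with secants of slope `> n + 1` over steps `< 1/(n+1)` contain a dense open set.
Intersecting over the countably many `(n, i)` gives the dense `G_δ`; for `‖v‖_∞ = 1` some `|v_i|`
exceeds `1/2`, and the resulting steps `t_n → 0` have unbounded difference quotients.
-/

open Filter Topology

lemma Complex.abs_re_sub_abs_re_le_norm_sub (z w : ℂ) : |z.re| - |w.re| ≤ ‖z - w‖ :=
  (abs_sub_abs_le_abs_sub _ _).trans (by simpa using Complex.abs_re_le_norm (z - w))

lemma Complex.abs_im_sub_abs_im_le_norm_sub (z w : ℂ) : |z.im| - |w.im| ≤ ‖z - w‖ :=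
  (abs_sub_abs_le_abs_sub _ _).trans (by simpa using Complex.abs_im_le_norm (z - w))

lemma UniformContinuous.exists_forall_dist_lt {ι β α : Type*} [PseudoMetricSpace β]
    [PseudoMetricSpace α] {F : (ι → β) → α} (hF : UniformContinuous F) {ε : ℝ} (hε : 0 < ε) :
    ∃ δ > 0, ∀ x y : ι → β, (∀ i, dist (x i) (y i) < δ) → dist (F x) (F y) < ε := by
  have hmem := (hF.comp UniformFun.uniformContinuous_toFun) (Metric.dist_mem_uniformity hε)
  rw [mem_map, (UniformFun.hasBasis_uniformity_of_basis ι β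
    Metric.uniformity_basis_dist).mem_iff] at hmem
  obtain ⟨δ, hδ, hsub⟩ := hmem
  exact ⟨δ, hδ, fun x y hxy =>
    hsub (show (UniformFun.ofFun x, UniformFun.ofFun y) ∈ _ from hxy)⟩

lemma lipschitzWith_exp_ofReal_mul_I :
    LipschitzWith 1 fun x : ℝ => Complex.exp (x * Complex.I) := by
  refine LipschitzWith.of_dist_le_mul fun x y => ?_
  have hxy : Complex.exp (x * Complex.I) - Complex.exp (y * Complex.I) =
      Complex.exp (y * Complex.I) * (Complex.exp (Complex.I * (x - y : ℝ)) - 1) := by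
    rw [mul_sub, ← Complex.exp_add]
    push_cast
    ring_nf
  rw [Complex.dist_eq, hxy, norm_mul, Complex.norm_exp_ofReal_mul_I, one_mul, NNReal.coe_one,
    one_mul, Real.dist_eq]
  exact Real.norm_exp_I_mul_ofReal_sub_one_le

open Real in
lemma exists_shift_abs_cos_sub_abs_sin_sub_ge (φ : ℝ) : ∃ ψ, 0 < ψ ∧ ψ ≤ π ∧
    1 / 2 ≤ |cos (φ + ψ) - cos φ| ∧ 1 / 2 ≤ |sin (φ + ψ) - sin φ| := by
  have hπ := pi_pos
  by_cases hlarge : 1 / 4 ≤ |cos φ| ∧ 1 / 4 ≤ |sin φ|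
  · refine ⟨π, hπ, le_rfl, ?_, ?_⟩
    · rw [cos_add_pi, ← neg_add', abs_neg, ← two_mul, abs_mul, abs_two]; linarith
    · rw [sin_add_pi, ← neg_add', abs_neg, ← two_mul, abs_mul, abs_two]; linarith
  -- otherwise one of `|cos φ|`, `|sin φ|` is `< 1/4`, so the other is `> 3/4`, and `ψ = π/2`
  -- swaps them
  have hgap : 1 / 2 ≤ |(|cos φ| - |sin φ|)| := by
    have := sin_sq_add_cos_sq φ
    rw [le_abs]
    rw [not_and_or, not_le, not_le] at hlarge
    rcases hlarge with h | h
    · right; nlinarith [sq_abs (cos φ), sq_abs (sin φ), abs_nonneg (cos φ), abs_nonneg (sin φ)]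
    · left; nlinarith [sq_abs (cos φ), sq_abs (sin φ), abs_nonneg (cos φ), abs_nonneg (sin φ)]
  refine ⟨π / 2, by positivity, by linarith, ?_, ?_⟩
  · rw [cos_add_pi_div_two, ← neg_add', abs_neg, add_comm]
    refine hgap.trans ?_
    simpa only [abs_neg, sub_neg_eq_add] using abs_abs_sub_abs_le_abs_sub (cos φ) (-sin φ)
  · rw [sin_add_pi_div_two]
    exact hgap.trans (abs_abs_sub_abs_le_abs_sub _ _)

open Real in
lemma exists_step_mul_apply_eq {ι : Type*} (θ : ι → ℝ) {v : ι → ℝ} {i : ι} (hvi : 1 / 2 ≤ |v i|)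
    {M : ℕ} (hM : 0 < M) {ψ : ℝ} (hψ : 0 < ψ) (hψπ : ψ ≤ π) :
    ∃ t ≠ 0, |t| ≤ 2 * π / M ∧ M * (θ + t • v) i = M * θ i + ψ := by
  have hM' : (0 : ℝ) < M := Nat.cast_pos.mpr hM
  have hvi0 : v i ≠ 0 := abs_pos.mp (by linarith)
  refine ⟨ψ / (M * v i), div_ne_zero hψ.ne' (mul_ne_zero hM'.ne' hvi0), ?_, ?_⟩
  · rw [abs_div, abs_mul, Nat.abs_cast, abs_of_pos hψ, div_le_div_iff₀ (by positivity) hM']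
    nlinarith [mul_le_mul_of_nonneg_left hvi (by positivity : (0 : ℝ) ≤ 2 * π * M),
      mul_le_mul_of_nonneg_right hψπ hM'.le]
  · simp only [Pi.add_apply, Pi.smul_apply, smul_eq_mul]
    field_simp

lemma not_exists_tendsto_slope {F : ℝ → ℝ} {a : ℝ}
    (h : ∀ n : ℕ, ∃ t ≠ 0, |t| < 1 / ((n : ℝ) + 1) ∧ ((n : ℝ) + 1) * |t| < |F t - a|) :
    ¬ ∃ L, Tendsto (fun t => (F t - a) / t) (𝓝[≠] 0) (𝓝 L) := by
  rintro ⟨L, hL⟩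
  choose t ht0 ht htF using h
  have htends : Tendsto t atTop (𝓝[≠] 0) :=
    tendsto_nhdsWithin_iff.mpr ⟨squeeze_zero_norm (fun n => (ht n).le)
      tendsto_one_div_add_atTop_nhds_zero_nat, .of_forall ht0⟩
  have hunbdd : Tendsto (fun n => |(F (t n) - a) / t n|) atTop atTop := by
    refine tendsto_atTop_mono (fun n => ?_) tendsto_natCast_atTop_atTop
    rw [abs_div, le_div_iff₀ (abs_pos.mpr (ht0 n))]
    nlinarith [abs_nonneg (t n), htF n]
  exact not_tendsto_nhds_of_tendsto_atTop hunbdd _ (hL.comp htends).abs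

section SeparatelyHolomorphic

variable {I : Type*}

def SeparatelyHolomorphic (f : C(PolyDisc I, ℂ)) : Prop :=
  ∀ (i : I) (z : I → ℂ), (∀ j, ‖z j‖ < 1) →
    DifferentiableAt ℂ (fun w : ℂ => ext f (Function.update z i w)) (z i)

lemma mem_polyDisc_update {z : I → ℂ} (hz : ∀ j, ‖z j‖ < 1) (i : I) {w : ℂ}
    (hw : ‖w‖ ≤ 1) : Function.update z i w ∈ PolyDisc I := by
  intro j _
  rw [mem_closedBall_zero_iff]
  rcases eq_or_ne j i with rfl | h
  · rwa [Function.update_self]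
  · rw [Function.update_of_ne h]; exact (hz j).le

lemma ext_add (f g : C(PolyDisc I, ℂ)) (z : I → ℂ) : ext (f + g) z = ext f z + ext g z := by
  unfold ext
  split <;> simp

lemma ext_smul (c : ℂ) (f : C(PolyDisc I, ℂ)) (z : I → ℂ) : ext (c • f) z = c • ext f z := by
  unfold ext
  split <;> simp

lemma SeparatelyHolomorphic.add {f g : C(PolyDisc I, ℂ)} (hf : SeparatelyHolomorphic f)
    (hg : SeparatelyHolomorphic g) : SeparatelyHolomorphic (f + g) := fun i z hz =>
  ((hf i z hz).add (hg i z hz)).congr_of_eventuallyEq (.of_forall fun _ => ext_add f g _)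

lemma SeparatelyHolomorphic.const_smul {f : C(PolyDisc I, ℂ)} (hf : SeparatelyHolomorphic f)
    (c : ℂ) : SeparatelyHolomorphic (c • f) := fun i z hz =>
  ((hf i z hz).const_smul c).congr_of_eventuallyEq (.of_forall fun _ => ext_smul c f _)

def coordPow (i : I) (M : ℕ) : C(PolyDisc I, ℂ) :=
  ⟨fun z => z.1 i ^ M, ((continuous_apply i).comp continuous_subtype_val).pow M⟩

lemma norm_coordPow_le_one (i : I) (M : ℕ) : ‖coordPow i M‖ ≤ 1 :=
  (ContinuousMap.norm_le _ zero_le_one).mpr fun z =>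
    (norm_pow _ M).trans_le <| pow_le_one₀ (norm_nonneg _) <|
      mem_closedBall_zero_iff.mp (z.2 i (Set.mem_univ i))

lemma separatelyHolomorphic_coordPow (i : I) (M : ℕ) :
    SeparatelyHolomorphic (coordPow i M) := by
  intro k z hz
  have hnear : ∀ᶠ w in 𝓝 (z k), Function.update z k w ∈ PolyDisc I := by
    filter_upwards [Metric.isOpen_ball.mem_nhds (mem_ball_zero_iff.mpr (hz k))] with w hw
    exact mem_polyDisc_update hz k (mem_ball_zero_iff.mp hw).le
  have heq : (fun w => ext (coordPow i M) (Function.update z k w)) =ᶠ[𝓝 (z k)]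
      fun w => Function.update z k w i ^ M := by
    filter_upwards [hnear] with w hw
    rw [ext, dif_pos hw]
    rfl
  rw [heq.differentiableAt_iff]
  rcases eq_or_ne i k with rfl | hne
  · simpa only [Function.update_self] using differentiableAt_pow M
  · simp only [Function.update_of_ne hne, differentiableAt_const]

lemma isClosed_setOf_separatelyHolomorphic :
    IsClosed {f : C(PolyDisc I, ℂ) | SeparatelyHolomorphic f} := by
  refine isClosed_of_closure_subset fun f hf i z hz => ?_
  obtain ⟨g, hg, hgf⟩ := mem_closure_iff_seq_limit.mp hf
  have hslice : ∀ k, DifferentiableOn ℂ (fun w => ext (g k) (Function.update z i w))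
      (Metric.ball 0 1) := by
    intro k w hw
    have hz' : ∀ j, ‖Function.update z i w j‖ < 1 := by
      intro j
      rcases eq_or_ne j i with rfl | h
      · rwa [Function.update_self, ← mem_ball_zero_iff]
      · rw [Function.update_of_ne h]; exact hz j
    simpa using (hg k i (Function.update z i w) hz').differentiableWithinAt
  have hunif : TendstoUniformlyOn (fun k w => ext (g k) (Function.update z i w))
      (fun w => ext f (Function.update z i w)) atTop (Metric.ball 0 1) := by
    rw [Metric.tendstoUniformlyOn_iff]
    intro ε hε
    filter_upwards [eventually_atTop.mpr (Metric.tendsto_atTop.mp hgf ε hε)] with k hk w hw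
    have hmem := mem_polyDisc_update hz i (mem_ball_zero_iff.mp hw).le
    rw [ext, dif_pos hmem, ext, dif_pos hmem, dist_comm]
    exact (ContinuousMap.dist_apply_le_dist _).trans_lt hk
  exact (hunif.tendstoLocallyUniformlyOn.differentiableOn (.of_forall hslice)
    Metric.isOpen_ball).differentiableAt
    (Metric.isOpen_ball.mem_nhds (mem_ball_zero_iff.mpr (hz i)))

instance : CompleteSpace (PolyDiscAlgebra I) :=
  isClosed_setOf_separatelyHolomorphic.completeSpace_coe

end SeparatelyHolomorphic

section Boundary

variable {I : Type*}

def perturb (f : PolyDiscAlgebra I) (c : ℂ) (i : I) (M : ℕ) : PolyDiscAlgebra I :=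
  ⟨f.1 + c • coordPow i M,
    SeparatelyHolomorphic.add f.2 ((separatelyHolomorphic_coordPow i M).const_smul c)⟩

lemma dist_perturb_le (f : PolyDiscAlgebra I) (c : ℂ) (i : I) (M : ℕ) :
    dist (perturb f c i M) f ≤ ‖c‖ := by
  change dist (f.1 + c • coordPow i M) f.1 ≤ ‖c‖
  rw [dist_self_add_left, norm_smul]
  exact mul_le_of_le_one_right (norm_nonneg c) (norm_coordPow_le_one i M)

lemma pbdry_perturb (f : PolyDiscAlgebra I) (c : ℂ) (i : I) (M : ℕ) (θ : I → ℝ) :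
    pbdry (perturb f c i M) θ =
      pbdry f θ + c * Complex.exp (((M * θ i : ℝ) : ℂ) * Complex.I) := by
  change pbdry f θ + c * Complex.exp (θ i * Complex.I) ^ M = _
  rw [← Complex.exp_nat_mul]
  push_cast
  ring_nf

lemma norm_pbdry_sub_le_dist (f g : PolyDiscAlgebra I) (θ : I → ℝ) :
    ‖pbdry f θ - pbdry g θ‖ ≤ dist f g :=
  (Complex.dist_eq _ _).symm.trans_le (ContinuousMap.dist_apply_le_dist (f := f.1) (g := g.1) _)

lemma uniformContinuous_pbdry (f : PolyDiscAlgebra I) : UniformContinuous (pbdry f) :=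
  (CompactSpace.uniformContinuous_of_continuous f.1.continuous).comp <|
    (uniformContinuous_pi.mpr fun i =>
      lipschitzWith_exp_ofReal_mul_I.uniformContinuous.comp
        (Pi.uniformContinuous_proj _ i)).subtype_mk _

end Boundary

section Steep

variable {I : Type*}

def HasSteepSecants (n : ℕ) (i : I) (f : PolyDiscAlgebra I) : Prop :=
  ∀ θ v : I → ℝ, (∀ j, |v j| ≤ 1) → 1 / 2 ≤ |v i| →
    ∃ t ≠ 0, |t| < 1 / ((n : ℝ) + 1) ∧
      ((n : ℝ) + 1) * |t| < |(pbdry f (θ + t • v)).re - (pbdry f θ).re| ∧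
      ((n : ℝ) + 1) * |t| < |(pbdry f (θ + t • v)).im - (pbdry f θ).im|

lemma norm_pbdry_sub_sub_perturb_lt {f g : PolyDiscAlgebra I} {c : ℂ} {i : I} {M : ℕ} {r : ℝ}
    (hg : dist g (perturb f c i M) < r) {x θ : I → ℝ} (hf : dist (pbdry f x) (pbdry f θ) < r) :
    ‖(pbdry g x - pbdry g θ) - c * (Complex.exp (((M * x i : ℝ) : ℂ) * Complex.I) -
      Complex.exp (((M * θ i : ℝ) : ℂ) * Complex.I))‖ < 3 * r := by
  set h := perturb f c i M
  have hsplit : (pbdry g x - pbdry g θ) - c * (Complex.exp (((M * x i : ℝ) : ℂ) * Complex.I) -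
      Complex.exp (((M * θ i : ℝ) : ℂ) * Complex.I)) =
      (pbdry f x - pbdry f θ) + (pbdry g x - pbdry h x) - (pbdry g θ - pbdry h θ) := by
    simp only [h, pbdry_perturb]
    ring
  rw [hsplit]
  calc _ ≤ ‖pbdry f x - pbdry f θ‖ + ‖pbdry g x - pbdry h x‖ + ‖pbdry g θ - pbdry h θ‖ :=
        norm_sub_le_of_le (norm_add_le _ _) le_rfl
    _ < r + r + r := by
        gcongr
        exacts [Complex.dist_eq _ _ ▸ hf, (norm_pbdry_sub_le_dist g h x).trans_lt hg,
          (norm_pbdry_sub_le_dist g h θ).trans_lt hg]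
    _ = 3 * r := by ring

open Real in
lemma hasSteepSecants_of_dist_perturb_lt {n : ℕ} {i : I} {f g : PolyDiscAlgebra I} {c δ : ℝ}
    {M : ℕ} (hc : 0 < c)
    (hδ : ∀ x θ : I → ℝ, (∀ j, dist (x j) (θ j) < δ) → dist (pbdry f x) (pbdry f θ) < c / 8)
    (hM : 0 < M) (hMδ : 2 * π / M < δ) (hMn : 2 * π / M < 1 / ((n : ℝ) + 1))
    (hMc : 2 * π / M < c / 8 / ((n : ℝ) + 1)) (hg : dist g (perturb f c i M) < c / 8) :
    HasSteepSecants n i g := by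
  intro θ v hv hvi
  obtain ⟨ψ, hψ, hψπ, hcos, hsin⟩ := exists_shift_abs_cos_sub_abs_sin_sub_ge (M * θ i)
  obtain ⟨t, ht0, ht, hxi⟩ := exists_step_mul_apply_eq θ hvi hM hψ hψπ
  have hclose : ∀ j, dist ((θ + t • v) j) (θ j) < δ := fun j => by
    simpa [Real.dist_eq, abs_mul] using
      (mul_le_of_le_one_right (abs_nonneg t) (hv j)).trans_lt (ht.trans_lt hMδ)
  have hD := norm_pbdry_sub_sub_perturb_lt hg (hδ _ _ hclose)
  rw [hxi] at hD
  have hsteep : ((n : ℝ) + 1) * |t| < c / 8 :=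
    (mul_le_mul_of_nonneg_left ht (by positivity)).trans_lt <|
      (lt_div_iff₀' (by positivity)).mp hMc
  refine ⟨t, ht0, ht.trans_lt hMn, ?_, ?_⟩
  -- the jump `c (e^{i(Mθ_i + ψ)} - e^{iMθ_i})` is `≥ c/2` in both parts, the error `< 3c/8`
  · have hre := (Complex.abs_re_sub_abs_re_le_norm_sub _ _).trans_lt
      ((norm_sub_rev _ _).trans_lt hD)
    simp only [Complex.sub_re, Complex.mul_re, Complex.ofReal_re, Complex.ofReal_im,
      Complex.exp_ofReal_mul_I_re, zero_mul, sub_zero, abs_mul, abs_of_pos hc] at hre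
    nlinarith
  · have him := (Complex.abs_im_sub_abs_im_le_norm_sub _ _).trans_lt
      ((norm_sub_rev _ _).trans_lt hD)
    simp only [Complex.sub_im, Complex.mul_im, Complex.ofReal_re, Complex.ofReal_im,
      Complex.exp_ofReal_mul_I_im, zero_mul, add_zero, abs_mul, abs_of_pos hc] at him
    nlinarith

open Real in
lemma dense_interior_setOf_hasSteepSecants (n : ℕ) (i : I) :
    Dense (interior {f : PolyDiscAlgebra I | HasSteepSecants n i f}) := by
  refine Metric.dense_iff.mpr fun f r hr => ?_
  obtain ⟨δ, hδ, hfδ⟩ :=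
    (uniformContinuous_pbdry f).exists_forall_dist_lt (by positivity : 0 < r / 2 / 8)
  have hsmall := tendsto_const_div_atTop_nhds_zero_nat (2 * π)
  obtain ⟨M, hM, hMδ, hMn, hMc⟩ : ∃ M : ℕ, 0 < M ∧ 2 * π / M < δ ∧
      2 * π / M < 1 / ((n : ℝ) + 1) ∧ 2 * π / M < r / 2 / 8 / ((n : ℝ) + 1) :=
    ((eventually_gt_atTop 0).and ((hsmall.eventually (gt_mem_nhds hδ)).and
      ((hsmall.eventually (gt_mem_nhds (by positivity))).and
        (hsmall.eventually (gt_mem_nhds (by positivity)))))).exists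
  refine ⟨perturb f (r / 2 : ℝ) i M, ?_, ?_⟩
  · refine Metric.mem_ball.mpr ((dist_perturb_le f _ i M).trans_lt ?_)
    rw [Complex.norm_real, Real.norm_of_nonneg (by positivity)]
    linarith
  · rw [mem_interior_iff_mem_nhds, Metric.mem_nhds_iff]
    exact ⟨r / 2 / 8, by positivity, fun g hg =>
      hasSteepSecants_of_dist_perturb_lt (by positivity) hfδ hM hMδ hMn hMc hg⟩

end Steep

open Filter in
/-- Generically, for `f` in the polydisc algebra (`I` finite or countably infinite),
neither the real nor the imaginary part of the boundary values has a directional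
derivative at any point `θ ∈ ℝ^I` in any direction `v` with `‖v‖_∞ = 1`. -/
theorem generic_no_directional_derivative (I : Type*) [Countable I] :
    ∃ G : Set (PolyDiscAlgebra I), IsGδ G ∧ Dense G ∧
      ∀ f ∈ G, ∀ θ v : I → ℝ, SupNormOne v →
        (¬ ∃ L : ℝ, Tendsto
          (fun t : ℝ => ((pbdry f (θ + t • v)).re - (pbdry f θ).re) / t)
          (nhdsWithin 0 {0}ᶜ) (nhds L)) ∧
        (¬ ∃ L : ℝ, Tendsto
          (fun t : ℝ => ((pbdry f (θ + t • v)).im - (pbdry f θ).im) / t)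
          (nhdsWithin 0 {0}ᶜ) (nhds L)) := by
  refine ⟨⋂ p : ℕ × I, interior {f | HasSteepSecants p.1 p.2 f},
    .iInter fun _ => isOpen_interior.isGδ,
    dense_iInter_of_isOpen (fun _ => isOpen_interior)
      fun p => dense_interior_setOf_hasSteepSecants p.1 p.2, ?_⟩
  intro f hf θ v hv
  obtain ⟨i, hi⟩ := hv.2 (1 / 2) (by norm_num)
  have hsteep (n : ℕ) := interior_subset (Set.mem_iInter.mp hf (n, i)) θ v hv.1 (by linarith)
  constructor
  · refine not_exists_tendsto_slope (F := fun t => (pbdry f (θ + t • v)).re) fun n => ?_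
    obtain ⟨t, ht0, ht, hre, -⟩ := hsteep n
    exact ⟨t, ht0, ht, hre⟩
  · refine not_exists_tendsto_slope (F := fun t => (pbdry f (θ + t • v)).im) fun n => ?_
    obtain ⟨t, ht0, ht, -, him⟩ := hsteep n
    exact ⟨t, ht0, ht, him⟩
end
end
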